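/- arXiv:math/0605503 — 2 statements merged into one kernel-verified Lean document; each statement's English description precedes it below -/
import Mathlib

section
/- For a family F of proper arcs and any point p on the circle: when traversing the circle in the clockwise direction starting from p, the right endpoints of all arcs in the overlap set O(p) are encountered before the right endpoint of any arc of F not in O(p). -/
open SimpleGraph
open scoped Classical

instance : Fact ((0:ℝ) < 1) := ⟨one_pos⟩

/-- An arc on the unit circle `AddCircle 1`, described by its left endpoint (the first
endpoint met anticlockwise from an interior point) and its (clockwise) length.
Since `0 < len < 1`, an arc is neither a single point nor the whole circle. -/
structure CArc where
  left : AddCircle (1:ℝ)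
  len : ℝ
  len_pos : 0 < len
  len_lt_one : len < 1

namespace CArc

/-- The set of points of the arc: going clockwise from the left endpoint for `len`. -/
def pts (a : CArc) : Set (AddCircle (1:ℝ)) :=
  {q | ∃ t : ℝ, 0 ≤ t ∧ t ≤ a.len ∧ q = a.left + (t : AddCircle (1:ℝ))}

/-- The right endpoint of an arc. -/
noncomputable def right (a : CArc) : AddCircle (1:ℝ) := a.left + ((a.len : ℝ) : AddCircle (1:ℝ))

end CArc

/-- A family of arcs on the circle: a finite set of arcs with all endpoints distinct. -/
structure ArcFamily where
  arcs : Finset CArc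
  endpoints_distinct :
    ∀ a ∈ arcs, ∀ b ∈ arcs, a ≠ b →
      a.left ≠ b.left ∧ a.left ≠ b.right ∧ a.right ≠ b.left ∧ a.right ≠ b.right

namespace ArcFamily

/-- A family of arcs is proper if no arc is properly contained in another. -/
def IsProper (F : ArcFamily) : Prop :=
  ∀ a ∈ F.arcs, ∀ b ∈ F.arcs, ¬ a.pts ⊂ b.pts

/-- The overlap set of a point `p`: all arcs of the family containing `p`. -/
noncomputable def overlap (F : ArcFamily) (p : AddCircle (1:ℝ)) : Finset CArc :=
  F.arcs.filter fun a => p ∈ a.pts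

/-- `r_sup`: the maximum cardinality of an overlap set. -/
noncomputable def rsup (F : ArcFamily) : ℕ :=
  sSup {n | ∃ p, (F.overlap p).card = n}

/-- `r_inf`: the minimum cardinality of an overlap set. -/
noncomputable def rinf (F : ArcFamily) : ℕ :=
  sInf {n | ∃ p, (F.overlap p).card = n}

/-- The circular arc graph of a family: vertices are the arcs, two distinct arcs are
adjacent iff they intersect. -/
def graph (F : ArcFamily) : SimpleGraph {a : CArc // a ∈ F.arcs} where
  Adj u v := u ≠ v ∧ (u.1.pts ∩ v.1.pts).Nonempty
  symm := ⟨by rintro u v ⟨h, q, h1, h2⟩; exact ⟨h.symm, q, h2, h1⟩⟩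
  loopless := ⟨by rintro u ⟨h, -⟩; exact h rfl⟩

/-- `F.CwAdj u v` : the arc `v` is clockwise adjacent to the arc `u`,
i.e. `v ≠ u` and `v ∈ O(r(u))`. -/
def CwAdj (F : ArcFamily) (u v : CArc) : Prop :=
  v ≠ u ∧ v ∈ F.overlap u.right

/-- `F.AcwAdj u v` : the arc `v` is anticlockwise adjacent to the arc `u`,
i.e. `v ≠ u` and `v ∈ O(l(u))`. -/
def AcwAdj (F : ArcFamily) (u v : CArc) : Prop :=
  v ≠ u ∧ v ∈ F.overlap u.left

end ArcFamily

/-- `G` has a complete minor on `m` vertices: there are `m` pairwise disjoint connected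
branch sets with an edge of `G` between any two of them. -/
def HasKMinor {V : Type*} (G : SimpleGraph V) (m : ℕ) : Prop :=
  ∃ B : Fin m → Set V,
    (∀ i, (G.induce (B i)).Connected) ∧
    (Pairwise fun i j => Disjoint (B i) (B j)) ∧
    (Pairwise fun i j => ∃ u ∈ B i, ∃ v ∈ B j, G.Adj u v)

/-- A graph is a proper circular arc graph if it is isomorphic to the circular arc graph
of some proper family of arcs. -/
def IsProperCircularArcGraph {V : Type*} (G : SimpleGraph V) : Prop :=
  ∃ F : ArcFamily, F.IsProper ∧ Nonempty (G ≃g F.graph)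

/-- The clockwise angular distance from `p` to `q`: the unique `t ∈ [0,1)`
with `q = p + t`.  Points are "encountered" in clockwise order of this quantity
when traversing clockwise from `p`. -/
noncomputable def angFrom (p q : AddCircle (1:ℝ)) : ℝ :=
  ((AddCircle.equivIco (1:ℝ) 0) (q - p) : ℝ)

/-! Measured clockwise from `p`, an arc contains `p` exactly when its right endpoint lies
within one arc length of `p`. So if `u ∋ p`, `v ∌ p` and `r(v)` came no later than `r(u)`,
then `v` would lie in the part of `u` between `p` and `r(u)`, giving `v ⊊ u`. -/

lemma angFrom_mem_Ico (p q : AddCircle (1:ℝ)) : angFrom p q ∈ Set.Ico (0:ℝ) 1 := by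
  simpa [angFrom] using (AddCircle.equivIco (1:ℝ) 0 (q - p)).2

lemma add_angFrom (p q : AddCircle (1:ℝ)) : p + (angFrom p q : AddCircle (1:ℝ)) = q := by
  rw [angFrom, AddCircle.coe_equivIco]
  abel

lemma angFrom_sub_coe (q : AddCircle (1:ℝ)) {x : ℝ} (hx : x ∈ Set.Ico (0:ℝ) 1) :
    angFrom (q - (x : AddCircle (1:ℝ))) q = x := by
  rw [angFrom, sub_sub_cancel, AddCircle.equivIco_coe_of_mem]
  simpa using hx

namespace CArc

lemma mem_pts_iff_eq_right_sub (a : CArc) (q : AddCircle (1:ℝ)) :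
    q ∈ a.pts ↔ ∃ t : ℝ, 0 ≤ t ∧ t ≤ a.len ∧ q = a.right - (t : AddCircle (1:ℝ)) := by
  have hcoe (t : ℝ) : a.left + ((a.len - t : ℝ) : AddCircle (1:ℝ)) = a.right - t := by
    rw [right, AddCircle.coe_sub]
    abel
  constructor
  · rintro ⟨t, ht0, ht1, rfl⟩
    exact ⟨a.len - t, by linarith, by linarith, by rw [← hcoe, sub_sub_cancel]⟩
  · rintro ⟨t, ht0, ht1, rfl⟩
    exact ⟨a.len - t, by linarith, by linarith, (hcoe t).symm⟩

lemma mem_pts_iff_angFrom_right_le (a : CArc) (p : AddCircle (1:ℝ)) :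
    p ∈ a.pts ↔ angFrom p a.right ≤ a.len := by
  rw [mem_pts_iff_eq_right_sub]
  constructor
  · rintro ⟨t, ht0, ht1, rfl⟩
    rw [angFrom_sub_coe _ ⟨ht0, ht1.trans_lt a.len_lt_one⟩]
    exact ht1
  · intro h
    refine ⟨angFrom p a.right, (angFrom_mem_Ico p a.right).1, h, ?_⟩
    exact eq_sub_of_add_eq (add_angFrom p a.right)

lemma pts_subset_of_right_eq_add {a b : CArc} {p : AddCircle (1:ℝ)} {x y : ℝ}
    (ha : a.right = p + (x : AddCircle (1:ℝ))) (hb : b.right = p + (y : AddCircle (1:ℝ)))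
    (hxy : x ≤ y) (hlen : y - b.len ≤ x - a.len) : a.pts ⊆ b.pts := by
  intro q hq
  obtain ⟨t, ht0, ht1, rfl⟩ := (mem_pts_iff_eq_right_sub a q).1 hq
  refine (mem_pts_iff_eq_right_sub b _).2 ⟨y - x + t, by linarith, by linarith, ?_⟩
  rw [ha, hb, AddCircle.coe_add, AddCircle.coe_sub]
  abel

end CArc

/-- For a family of proper arcs and any point `p`: traversing the circle
clockwise from `p`, the right endpoints of all arcs in `O(p)` are encountered before the
right endpoint of any arc of `F` not in `O(p)`. -/
theorem overlap_right_endpoints_first (F : ArcFamily) (hF : F.IsProper)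
    (p : AddCircle (1:ℝ)) (u : CArc) (hu : u ∈ F.overlap p)
    (v : CArc) (hv : v ∈ F.arcs) (hvp : v ∉ F.overlap p) :
    angFrom p u.right < angFrom p v.right := by
  obtain ⟨huF, hpu⟩ := Finset.mem_filter.mp hu
  have hpv : p ∉ v.pts := fun h => hvp (Finset.mem_filter.mpr ⟨hv, h⟩)
  have hu_len := (u.mem_pts_iff_angFrom_right_le p).1 hpu
  have hv_len := lt_of_not_ge (mt (v.mem_pts_iff_angFrom_right_le p).2 hpv)
  by_contra! hle
  have hsub : v.pts ⊆ u.pts :=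
    CArc.pts_subset_of_right_eq_add (add_angFrom p v.right).symm (add_angFrom p u.right).symm
      hle (by linarith)
  exact hF v hv u huF ⟨hsub, fun h => hpv (h hpu)⟩
end

section
/- For the minimum counterexample 𝒢, with r = |O|, x = χ(𝒢) − r and k = n − r, the integer k is not divisible by x. -/
open SimpleGraph
open scoped Classical

/-- A minimum counterexample to Hadwiger's conjecture among proper circular arc graphs:
a proper family of arcs whose circular arc graph `𝒢` has no complete minor on `χ(𝒢)`
vertices, while every proper circular arc graph on fewer vertices than `𝒢` has a
complete minor on its own chromatic number of vertices. -/
structure MinCounterexample where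
  F : ArcFamily
  proper : F.IsProper
  no_clique_minor : ∀ m : ℕ, F.graph.chromaticNumber = m → ¬ HasKMinor F.graph m
  minimal : ∀ (V : Type) [inst : Fintype V] (G : SimpleGraph V),
    IsProperCircularArcGraph G → Fintype.card V < F.arcs.card →
    ∀ m : ℕ, G.chromaticNumber = m → HasKMinor G m

/-- A minimum counterexample `𝒢` to Hadwiger's conjecture among proper circular arc
graphs, together with a fixed maximum overlap set `O = O(p₀)` of cardinality `r`,
the quantities `x = χ(𝒢) − r` and `k = n − r`, and the labeling `q 1, …, q r`
(the arcs of `O`) and `a 1, …, a k` (the remaining arcs) of the arcs of the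
representation in the clockwise order, starting from `p₀`, in which their right
endpoints are encountered. -/
structure LabeledMinCounterexample extends MinCounterexample where
  p₀ : AddCircle (1:ℝ)
  r : ℕ
  x : ℕ
  k : ℕ
  q : ℕ → CArc
  a : ℕ → CArc
  hr : (F.overlap p₀).card = r
  hmax : r = F.rsup
  hx : F.graph.chromaticNumber = ((r + x : ℕ) : ℕ∞)
  hk : F.arcs.card = r + k
  q_mem : ∀ i, 1 ≤ i → i ≤ r → q i ∈ F.overlap p₀
  a_mem : ∀ j, 1 ≤ j → j ≤ k → a j ∈ F.arcs ∧ a j ∉ F.overlap p₀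
  q_inj : ∀ i i', 1 ≤ i → i ≤ r → 1 ≤ i' → i' ≤ r → q i = q i' → i = i'
  a_inj : ∀ j j', 1 ≤ j → j ≤ k → 1 ≤ j' → j' ≤ k → a j = a j' → j = j'
  q_order : ∀ i i', 1 ≤ i → i < i' → i' ≤ r →
    angFrom p₀ (q i).right < angFrom p₀ (q i').right
  a_order : ∀ j j', 1 ≤ j → j < j' → j' ≤ k →
    angFrom p₀ (a j).right < angFrom p₀ (a j').right
  qa_order : ∀ i j, 1 ≤ i → i ≤ r → 1 ≤ j → j ≤ k →
    angFrom p₀ (q i).right < angFrom p₀ (a j).right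

/-!
Label the arcs avoiding `p₀` as `a 0, …, a (k-1)` in the order of their right endpoints. A
minimum counterexample has minimum degree at least `χ - 1 = r + x - 1`. In a proper family every
neighbour of an arc contains one of its endpoints, and overlap sets have at most `r` arcs, so at
least `x + 1` arcs pass through every right endpoint, and every arc of `O` contains an endpoint
of at least `x` of the arcs `a j`. Consequently `a j` meets `a j'` whenever `j < j' ≤ j + x`,
and every arc of `O` contains the left endpoint of `a i` or the right endpoint of
`a (k - x + i)`. If `x ∣ k`, the arcs of `O` as singletons together with the `x` chains
`{a j | j ≡ i [MOD x]}`, which run from `a i` to `a (k - x + i)`, are the branch sets of a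
complete minor on `r + x` vertices.
-/

lemma angFrom_mem (b z : AddCircle (1:ℝ)) : angFrom b z ∈ Set.Ico (0:ℝ) 1 := by
  rw [angFrom]
  simpa only [zero_add] using ((AddCircle.equivIco (1:ℝ) 0) (z - b)).2

lemma angFrom_add_coe (b : AddCircle (1:ℝ)) (t : ℝ) :
    angFrom b (b + (t : AddCircle (1:ℝ))) = Int.fract t := by
  simp [angFrom, AddCircle.coe_equivIco_mk_apply]

lemma angFrom_add_coe_of_mem {t : ℝ} (b : AddCircle (1:ℝ)) (h0 : 0 ≤ t) (h1 : t < 1) :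
    angFrom b (b + (t : AddCircle (1:ℝ))) = t := by
  rw [angFrom_add_coe, Int.fract_eq_self.2 ⟨h0, h1⟩]

lemma coe_fract (t : ℝ) : ((Int.fract t : ℝ) : AddCircle (1:ℝ)) = t := by
  rw [Int.fract, AddCircle.coe_sub, sub_eq_self]
  simp

lemma exists_eq_add_coe (b z : AddCircle (1:ℝ)) : ∃ t : ℝ, z = b + (t : AddCircle (1:ℝ)) := by
  obtain ⟨t, ht⟩ := QuotientAddGroup.mk_surjective (z - b)
  exact ⟨t, by rw [← sub_eq_iff_eq_add']; exact ht.symm⟩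

lemma add_coe_angFrom (b z : AddCircle (1:ℝ)) : b + (angFrom b z : AddCircle (1:ℝ)) = z := by
  obtain ⟨t, rfl⟩ := exists_eq_add_coe b z
  rw [angFrom_add_coe, coe_fract]

lemma angFrom_eq_fract_sub (p b z : AddCircle (1:ℝ)) :
    angFrom b z = Int.fract (angFrom p z - angFrom p b) := by
  have h : b + ((angFrom p z - angFrom p b : ℝ) : AddCircle (1:ℝ)) = z :=
    calc b + ((angFrom p z - angFrom p b : ℝ) : AddCircle (1:ℝ))
        = (p + (angFrom p b : AddCircle (1:ℝ))) + ((angFrom p z : AddCircle (1:ℝ))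
            - (angFrom p b : AddCircle (1:ℝ))) := by rw [add_coe_angFrom, AddCircle.coe_sub]
      _ = p + (angFrom p z : AddCircle (1:ℝ)) := by abel
      _ = z := add_coe_angFrom p z
  conv_lhs => rw [← h]
  exact angFrom_add_coe b _

lemma angFrom_self (b : AddCircle (1:ℝ)) : angFrom b b = 0 := by
  simpa using angFrom_add_coe_of_mem b (t := 0) le_rfl one_pos

lemma fract_sub_of_le {y z : ℝ} (hzy : z ≤ y) (hy : y < 1) (hz : 0 ≤ z) :
    Int.fract (y - z) = y - z :=
  Int.fract_eq_self.2 ⟨by linarith, by linarith⟩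

lemma fract_sub_of_lt {y z : ℝ} (hyz : y < z) (hy : 0 ≤ y) (hz : z < 1) :
    Int.fract (y - z) = y - z + 1 := by
  rw [← Int.fract_add_one, Int.fract_eq_self.2 ⟨by linarith, by linarith⟩]

lemma CArc.mem_pts_iff (u : CArc) (p : AddCircle (1:ℝ)) :
    p ∈ u.pts ↔ angFrom u.left p ≤ u.len := by
  constructor
  · rintro ⟨t, ht0, htl, rfl⟩
    rwa [angFrom_add_coe_of_mem _ ht0 (htl.trans_lt u.len_lt_one)]
  · exact fun h => ⟨angFrom u.left p, (angFrom_mem _ _).1, h, (add_coe_angFrom _ _).symm⟩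

lemma CArc.left_mem_pts (u : CArc) : u.left ∈ u.pts :=
  ⟨0, le_rfl, u.len_pos.le, by simp⟩

lemma CArc.right_mem_pts (u : CArc) : u.right ∈ u.pts :=
  ⟨u.len, u.len_pos.le, le_rfl, rfl⟩

lemma CArc.angFrom_right (b : AddCircle (1:ℝ)) (u : CArc) :
    angFrom b u.right = Int.fract (angFrom b u.left + u.len) := by
  rw [CArc.right, ← angFrom_add_coe b, AddCircle.coe_add, ← add_assoc, add_coe_angFrom]

lemma CArc.mem_pts_iff_of_not_mem {u : CArc} {b : AddCircle (1:ℝ)} (hb : b ∉ u.pts)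
    (p : AddCircle (1:ℝ)) :
    p ∈ u.pts ↔ angFrom b u.left ≤ angFrom b p ∧ angFrom b p ≤ angFrom b u.right := by
  obtain ⟨hL0, hL1⟩ := angFrom_mem b u.left
  obtain ⟨hp0, hp1⟩ := angFrom_mem b p
  rw [u.mem_pts_iff, angFrom_eq_fract_sub b u.left, angFrom_self] at hb
  obtain hL | hL := hL0.eq_or_lt
  · simp [← hL, u.len_pos.le] at hb
  rw [fract_sub_of_lt hL le_rfl hL1] at hb
  have hR : angFrom b u.right = angFrom b u.left + u.len := by
    rw [u.angFrom_right b, Int.fract_eq_self.2 ⟨by linarith [u.len_pos], by linarith⟩]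
  rw [u.mem_pts_iff, angFrom_eq_fract_sub b u.left, hR]
  obtain h | h := le_or_gt (angFrom b u.left) (angFrom b p)
  · rw [fract_sub_of_le h hp1 hL0]
    exact ⟨fun h' => ⟨h, by linarith⟩, fun h' => by linarith [h'.2]⟩
  · rw [fract_sub_of_lt h hp0 hL1]
    exact ⟨fun _ => by linarith, fun h' => by linarith [h'.1]⟩

/-- The condition `angFrom b u.right < angFrom b u.left` says that `u` wraps around `b`,
i.e. `b` is not the left endpoint of `u`. -/
lemma CArc.mem_pts_iff_of_mem {u : CArc} {b : AddCircle (1:ℝ)} (hb : b ∈ u.pts)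
    (p : AddCircle (1:ℝ)) :
    p ∈ u.pts ↔ angFrom b p ≤ angFrom b u.right ∨
      (angFrom b u.right < angFrom b u.left ∧ angFrom b u.left ≤ angFrom b p) := by
  obtain ⟨hL0, hL1⟩ := angFrom_mem b u.left
  obtain ⟨hp0, hp1⟩ := angFrom_mem b p
  rw [u.mem_pts_iff, angFrom_eq_fract_sub b u.left, angFrom_self] at hb
  rw [u.mem_pts_iff, angFrom_eq_fract_sub b u.left, u.angFrom_right b]
  obtain hL | hL := hL0.eq_or_lt
  · rw [← hL, sub_zero, zero_add, Int.fract_eq_self.2 ⟨hp0, hp1⟩,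
      Int.fract_eq_self.2 ⟨u.len_pos.le, u.len_lt_one⟩]
    constructor
    · exact Or.inl
    · rintro (h | ⟨h, -⟩)
      · exact h
      · linarith [u.len_pos]
  rw [fract_sub_of_lt hL le_rfl hL1] at hb
  have hR : Int.fract (angFrom b u.left + u.len) = angFrom b u.left + u.len - 1 := by
    rw [← Int.fract_sub_one, Int.fract_eq_self.2 ⟨by linarith, by linarith [u.len_lt_one]⟩]
  rw [hR]
  obtain h | h := le_or_gt (angFrom b u.left) (angFrom b p)
  · rw [fract_sub_of_le h hp1 hL0]
    constructor <;> intro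
    · exact Or.inr ⟨by linarith [u.len_lt_one], h⟩
    · linarith
  · rw [fract_sub_of_lt h hp0 hL1]
    constructor
    · intro; left; linarith
    · rintro (h' | ⟨-, h'⟩) <;> linarith

lemma CArc.angFrom_left_right (u : CArc) : angFrom u.left u.right = u.len :=
  angFrom_add_coe_of_mem _ u.len_pos.le u.len_lt_one

namespace ArcFamily

variable {F : ArcFamily} {u w : CArc} {b : AddCircle (1:ℝ)}

lemma IsProper.left_le_left_of_right_lt (hF : F.IsProper) (hu : u ∈ F.arcs) (hw : w ∈ F.arcs)
    (hbu : b ∉ u.pts) (hbw : b ∉ w.pts)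
    (h : angFrom b u.right < angFrom b w.right) : angFrom b u.left ≤ angFrom b w.left := by
  by_contra! hlt
  refine hF u hu w hw ((Set.ssubset_iff_of_subset fun p hp => ?_).2 ⟨w.left, w.left_mem_pts, ?_⟩)
  · rw [CArc.mem_pts_iff_of_not_mem hbu] at hp
    rw [CArc.mem_pts_iff_of_not_mem hbw]
    exact ⟨hlt.le.trans hp.1, hp.2.trans h.le⟩
  · rw [CArc.mem_pts_iff_of_not_mem hbu]
    exact fun h' => h'.1.not_gt hlt

lemma IsProper.right_lt_right_of_mem_of_not_mem (hF : F.IsProper) (hu : u ∈ F.arcs)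
    (hw : w ∈ F.arcs) (hbu : b ∉ u.pts) (hbw : b ∈ w.pts) :
    angFrom b w.right < angFrom b u.right := by
  by_contra! h
  refine hF u hu w hw ((Set.ssubset_iff_of_subset fun p hp => ?_).2 ⟨b, hbw, hbu⟩)
  rw [CArc.mem_pts_iff_of_not_mem hbu] at hp
  exact (CArc.mem_pts_iff_of_mem hbw p).2 (Or.inl (hp.2.trans h))

lemma IsProper.left_lt_left_of_mem_of_not_mem (hF : F.IsProper) (hu : u ∈ F.arcs)
    (hw : w ∈ F.arcs) (hbu : b ∉ u.pts) (hbw : b ∈ w.pts)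
    (hwrap : angFrom b w.right < angFrom b w.left) : angFrom b u.left < angFrom b w.left := by
  by_contra! h
  refine hF u hu w hw ((Set.ssubset_iff_of_subset fun p hp => ?_).2 ⟨b, hbw, hbu⟩)
  rw [CArc.mem_pts_iff_of_not_mem hbu] at hp
  exact (CArc.mem_pts_iff_of_mem hbw p).2 (Or.inr ⟨hwrap, h.trans hp.1⟩)

/-- Otherwise `w` would lie strictly inside `u`. -/
lemma IsProper.left_mem_or_right_mem (hF : F.IsProper) (hu : u ∈ F.arcs) (hw : w ∈ F.arcs)
    (h : (u.pts ∩ w.pts).Nonempty) :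
    u.left ∈ w.pts ∨ u.right ∈ w.pts := by
  by_contra! ⟨hl, hr⟩
  obtain ⟨p, hpu, hpw⟩ := h
  rw [CArc.mem_pts_iff_of_not_mem hl] at hpw hr
  rw [u.mem_pts_iff] at hpu
  rw [u.angFrom_left_right] at hr
  have hR : angFrom u.left w.right < u.len := by
    by_contra! h'
    exact hr ⟨hpw.1.trans hpu, h'⟩
  refine hF w hw u hu ((Set.ssubset_iff_of_subset fun q hq => ?_).2 ⟨u.left, u.left_mem_pts, hl⟩)
  rw [CArc.mem_pts_iff_of_not_mem hl] at hq
  exact (u.mem_pts_iff q).2 (hq.2.trans hR.le)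

end ArcFamily

namespace SimpleGraph

variable {V : Type*} {G : SimpleGraph V}

lemma Colorable.of_induce_compl_singleton {v : V} [Fintype (G.neighborSet v)] {n : ℕ}
    (h : (G.induce {v}ᶜ).Colorable n) (hdeg : G.degree v < n) : G.Colorable n := by
  obtain ⟨c⟩ := h
  let c₀ : V → Fin n := fun w => if hw : w = v then ⟨0, by omega⟩ else c ⟨w, hw⟩
  obtain ⟨col, -, hcol⟩ := Finset.exists_mem_notMem_of_card_lt_card
    (s := (G.neighborFinset v).image c₀) (t := Finset.univ)
    (by simpa using Finset.card_image_le.trans_lt (G.card_neighborFinset_eq_degree v ▸ hdeg))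
  have hnbr {w : V} (hw : G.Adj v w) : c₀ w ≠ col := fun h =>
    hcol (Finset.mem_image.2 ⟨w, (G.mem_neighborFinset v w).2 hw, h⟩)
  refine ⟨Coloring.mk (fun w => if w = v then col else c₀ w) fun {a b} hab => ?_⟩
  by_cases ha : a = v <;> by_cases hb : b = v <;> simp only [ha, hb, if_true, if_false]
  · exact (G.ne_of_adj hab (ha.trans hb.symm)).elim
  · exact (hnbr (ha ▸ hab)).symm
  · exact hnbr (hb ▸ hab.symm)
  · simp only [c₀, dif_neg ha, dif_neg hb]
    exact c.valid (show (G.induce {v}ᶜ).Adj ⟨a, ha⟩ ⟨b, hb⟩ from hab)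

lemma induce_singleton_connected (v : V) : (G.induce {v}).Connected := by
  rw [induce_singleton_eq_top]
  exact connected_top

lemma induce_image_mod_connected {k x i : ℕ} (f : Fin k → V) (hik : i < k) (hix : i < x)
    (hadj : ∀ (j : Fin k) (h : (j : ℕ) + x < k), G.Adj (f j) (f ⟨j + x, h⟩)) :
    (G.induce (f '' {j | (j : ℕ) % x = i})).Connected := by
  set S := f '' {j | (j : ℕ) % x = i}
  have hmem {n : ℕ} (hn : n < k) (hni : n % x = i) : f ⟨n, hn⟩ ∈ S := ⟨_, hni, rfl⟩
  have hi : i % x = i := Nat.mod_eq_of_lt hix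
  have key : ∀ (n : ℕ) (hn : n < k) (hni : n % x = i),
      (G.induce S).Reachable ⟨f ⟨i, hik⟩, hmem hik hi⟩ ⟨f ⟨n, hn⟩, hmem hn hni⟩ := by
    intro n
    induction n using Nat.strong_induction_on with
    | _ n ih =>
      intro hn hni
      obtain hnx | hnx := lt_or_ge n x
      · obtain rfl : n = i := (Nat.mod_eq_of_lt hnx).symm.trans hni
        rfl
      · have hstep := hadj ⟨n - x, by omega⟩ (by simp only; omega)
        have e : (⟨n - x + x, by omega⟩ : Fin k) = ⟨n, hn⟩ := Fin.ext (Nat.sub_add_cancel hnx)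
        simp only [e] at hstep
        exact (ih (n - x) (by omega) (by omega) (by rwa [← Nat.mod_eq_sub_mod hnx])).trans
          (Adj.reachable hstep)
  have : Nonempty S := ⟨⟨_, hmem hik hi⟩⟩
  refine ⟨fun a b => ?_⟩
  obtain ⟨_, ⟨⟨na, ha⟩, hna, rfl⟩⟩ := a
  obtain ⟨_, ⟨⟨nb, hb⟩, hnb, rfl⟩⟩ := b
  exact (key na ha hna).symm.trans (key nb hb hnb)

end SimpleGraph

section Minor

variable {V W : Type*} {G : SimpleGraph V} {H : SimpleGraph W}

lemma HasKMinor.map {m : ℕ} (f : G ↪g H) (h : HasKMinor G m) : HasKMinor H m := by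
  obtain ⟨B, hconn, hdisj, hadj⟩ := h
  refine ⟨fun i => f '' B i, fun i => ?_, fun i j hij => ?_, fun i j hij => ?_⟩
  · let φ : G.induce (B i) →g H.induce (f '' B i) :=
      ⟨fun a => ⟨f a, a, a.2, rfl⟩, fun hab => f.map_rel_iff.2 hab⟩
    exact (hconn i).map φ (by rintro ⟨_, a, ha, rfl⟩; exact ⟨⟨a, ha⟩, rfl⟩)
  · exact (Set.disjoint_image_iff f.injective).2 (hdisj hij)
  · obtain ⟨u, hu, v, hv, huv⟩ := hadj hij
    exact ⟨f u, ⟨u, hu, rfl⟩, f v, ⟨v, hv, rfl⟩, f.map_rel_iff.2 huv⟩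

lemma hasKMinor_of_branchSets {ι : Type*} [Fintype ι] (B : ι → Set V)
    (hconn : ∀ i, (G.induce (B i)).Connected) (hdisj : Pairwise fun i j => Disjoint (B i) (B j))
    (hadj : Pairwise fun i j => ∃ u ∈ B i, ∃ v ∈ B j, G.Adj u v) :
    HasKMinor G (Fintype.card ι) :=
  let e := (Fintype.equivFin ι).symm
  ⟨B ∘ e, fun _ => hconn _, fun _ _ h => hdisj (e.injective.ne h),
    fun _ _ h => hadj (e.injective.ne h)⟩

end Minor

namespace ArcFamily

lemma graph_adj {F : ArcFamily} {u v : {a : CArc // a ∈ F.arcs}} :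
    F.graph.Adj u v ↔ u.1 ≠ v.1 ∧ (u.1.pts ∩ v.1.pts).Nonempty :=
  and_congr_left' (not_congr Subtype.ext_iff)

lemma degree_le_card (F : ArcFamily) (v : {a : CArc // a ∈ F.arcs}) {S : Finset CArc}
    (hS : ∀ w, F.graph.Adj v w → w.1 ∈ S) : F.graph.degree v ≤ S.card := by
  rw [← card_neighborFinset_eq_degree]
  exact Finset.card_le_card_of_injOn Subtype.val
    (fun w hw => hS w ((F.graph.mem_neighborFinset v w).1 hw)) Subtype.val_injective.injOn

noncomputable def erase (F : ArcFamily) (u : CArc) : ArcFamily where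
  arcs := F.arcs.erase u
  endpoints_distinct a ha b hb :=
    F.endpoints_distinct a (Finset.mem_of_mem_erase ha) b (Finset.mem_of_mem_erase hb)

lemma IsProper.erase {F : ArcFamily} (hF : F.IsProper) (u : CArc) : (F.erase u).IsProper :=
  fun a ha b hb => hF a (Finset.mem_of_mem_erase ha) b (Finset.mem_of_mem_erase hb)

def induceComplSingletonIso (F : ArcFamily) (v : {a : CArc // a ∈ F.arcs}) :
    F.graph.induce {v}ᶜ ≃g (F.erase v.1).graph where
  toFun w := ⟨w.1.1, Finset.mem_erase.2 ⟨fun h => w.2 (Subtype.ext h), w.1.2⟩⟩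
  invFun a := ⟨⟨a.1, Finset.mem_of_mem_erase a.2⟩,
    fun h => Finset.ne_of_mem_erase a.2 (congrArg Subtype.val h)⟩
  left_inv _ := rfl
  right_inv _ := rfl
  map_rel_iff' {a b} := graph_adj.trans (graph_adj (u := a.1) (v := b.1)).symm

end ArcFamily

/-- Deleting `v` leaves a smaller proper circular arc graph, which by minimality needs fewer
than `χ` colours (a `K_χ` minor of it would be one of the whole graph); if `v` had fewer than
`χ - 1` neighbours, a colour missing among them would extend such a colouring. -/
theorem MinCounterexample.le_degree_add_one (M : MinCounterexample) {m : ℕ}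
    (hm : M.F.graph.chromaticNumber = m) (v : {a : CArc // a ∈ M.F.arcs}) :
    m ≤ M.F.graph.degree v + 1 := by
  set H := M.F.graph.induce {v}ᶜ
  have hH : IsProperCircularArcGraph H :=
    ⟨_, M.proper.erase v.1, ⟨M.F.induceComplSingletonIso v⟩⟩
  have hcard : Fintype.card ({v}ᶜ : Set _) < M.F.arcs.card := by
    rw [← Fintype.card_coe]
    exact Fintype.card_subtype_lt (x := v) (by simp)
  have hle : H.chromaticNumber ≤ m := hm ▸ chromaticNumber_mono_of_hom (Embedding.induce _).toHom
  obtain ⟨m', hm'⟩ := ENat.ne_top_iff_exists.1 (ne_top_of_le_ne_top (ENat.natCast_ne_top m) hle)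
  have hlt : m' < m := by
    refine lt_of_le_of_ne (by rw [← hm'] at hle; exact_mod_cast hle) fun h => ?_
    exact M.no_clique_minor m hm (h ▸ (M.minimal _ H hH hcard m' hm'.symm).map (Embedding.induce _))
  by_contra! hdeg
  have hcol : M.F.graph.Colorable (m - 1) :=
    ((chromaticNumber_le_iff_colorable.1 hm'.symm.le).mono (by omega)).of_induce_compl_singleton
      (by omega)
  have := hcol.chromaticNumber_le
  rw [hm] at this
  norm_cast at this
  omega

lemma Fin.exists_mem_add_le_of_lt_card {k x : ℕ} {I : Finset (Fin k)} {j : Fin k}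
    (hI : ∀ i ∈ I, j ≤ i) (hcard : x < I.card) : ∃ i ∈ I, (j : ℕ) + x ≤ i := by
  by_contra! h
  have := Finset.card_le_card_of_injOn Fin.val (t := Finset.Ico (j : ℕ) (j + x))
    (fun i hi => Finset.mem_Ico.2 ⟨hI i hi, h i hi⟩) Fin.val_injective.injOn
  rw [Nat.card_Ico] at this
  omega

namespace LabeledMinCounterexample

variable (C : LabeledMinCounterexample)

/-- The arcs `a 1, …, a k`, reindexed from `0`. -/
def aArc (j : Fin C.k) : CArc := C.a (j + 1)

lemma aArc_mem (j : Fin C.k) : C.aArc j ∈ C.F.arcs := (C.a_mem _ (by omega) j.2).1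

lemma p₀_not_mem_aArc (j : Fin C.k) : C.p₀ ∉ (C.aArc j).pts := fun h =>
  (C.a_mem _ (by omega) j.2).2 (Finset.mem_filter.2 ⟨C.aArc_mem j, h⟩)

def aVert (j : Fin C.k) : {a : CArc // a ∈ C.F.arcs} := ⟨C.aArc j, C.aArc_mem j⟩

lemma aArc_injective : Function.Injective C.aArc := fun j j' h =>
  Fin.ext (by have := C.a_inj _ _ (by omega) j.2 (by omega) j'.2 h; omega)

lemma aVert_injective : Function.Injective C.aVert := fun _ _ h =>
  C.aArc_injective (congrArg Subtype.val h)

lemma strictMono_angFrom_right : StrictMono fun j => angFrom C.p₀ (C.aArc j).right :=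
  fun j j' h => C.a_order _ _ (by omega) (by simpa using h) j'.2

lemma monotone_angFrom_left : Monotone fun j => angFrom C.p₀ (C.aArc j).left := by
  intro j j' h
  obtain rfl | h := h.eq_or_lt
  · rfl
  · exact C.proper.left_le_left_of_right_lt (C.aArc_mem j) (C.aArc_mem j') (C.p₀_not_mem_aArc j)
      (C.p₀_not_mem_aArc j') (C.strictMono_angFrom_right h)

lemma mem_aArc_iff (j : Fin C.k) (p : AddCircle (1:ℝ)) :
    p ∈ (C.aArc j).pts ↔ angFrom C.p₀ (C.aArc j).left ≤ angFrom C.p₀ p ∧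
      angFrom C.p₀ p ≤ angFrom C.p₀ (C.aArc j).right :=
  CArc.mem_pts_iff_of_not_mem (C.p₀_not_mem_aArc j) p

lemma card_overlap_le (p : AddCircle (1:ℝ)) : (C.F.overlap p).card ≤ C.r :=
  C.hmax ▸ le_csSup ⟨C.F.arcs.card, by rintro _ ⟨p', rfl⟩; exact Finset.card_filter_le _ _⟩
    ⟨p, rfl⟩

lemma x_le_k : C.x ≤ C.k := by
  have h := C.F.graph.chromaticNumber_le_card
  rw [C.hx, Fintype.card_coe, C.hk] at h
  exact_mod_cast (Nat.add_le_add_iff_left).1 (by exact_mod_cast h)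

lemma image_aArc : Finset.univ.image C.aArc = C.F.arcs.filter fun w => C.p₀ ∉ w.pts := by
  refine Finset.eq_of_subset_of_card_le ?_ ?_
  · intro w hw
    obtain ⟨j, -, rfl⟩ := Finset.mem_image.1 hw
    exact Finset.mem_filter.2 ⟨C.aArc_mem j, C.p₀_not_mem_aArc j⟩
  · have h := Finset.card_filter_add_card_filter_not (s := C.F.arcs) fun w => C.p₀ ∈ w.pts
    rw [← ArcFamily.overlap, C.hr, C.hk] at h
    rw [Finset.card_image_of_injective _ C.aArc_injective, Finset.card_univ, Fintype.card_fin]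
    omega

lemma exists_aArc_eq {w : CArc} (hw : w ∈ C.F.arcs) (hpw : C.p₀ ∉ w.pts) :
    ∃ j, C.aArc j = w := by
  simpa using (Finset.ext_iff.1 C.image_aArc w).2 (Finset.mem_filter.2 ⟨hw, hpw⟩)

lemma r_add_x_le (v : {a : CArc // a ∈ C.F.arcs}) {S : Finset CArc}
    (hS : ∀ w, C.F.graph.Adj v w → w.1 ∈ S) : C.r + C.x ≤ S.card + 1 :=
  (C.le_degree_add_one C.hx v).trans (Nat.add_le_add_right (C.F.degree_le_card v hS) 1)

lemma add_one_le_card_overlap_right {u : CArc} (hu : u ∈ C.F.arcs) :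
    C.x + 1 ≤ (C.F.overlap u.right).card := by
  have hl : u ∈ C.F.overlap u.left := Finset.mem_filter.2 ⟨hu, u.left_mem_pts⟩
  have hr : u ∈ C.F.overlap u.right := Finset.mem_filter.2 ⟨hu, u.right_mem_pts⟩
  have h := C.r_add_x_le ⟨u, hu⟩
    (S := (C.F.overlap u.left).erase u ∪ (C.F.overlap u.right).erase u) fun w hw => by
      obtain ⟨hne, hmeet⟩ := ArcFamily.graph_adj.1 hw
      obtain h | h := C.proper.left_mem_or_right_mem hu w.2 hmeet
      · exact Finset.mem_union_left _ (Finset.mem_erase.2 ⟨hne.symm, Finset.mem_filter.2 ⟨w.2, h⟩⟩)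
      · exact Finset.mem_union_right _ (Finset.mem_erase.2 ⟨hne.symm, Finset.mem_filter.2 ⟨w.2, h⟩⟩)
  have hunion := Finset.card_union_le ((C.F.overlap u.left).erase u)
    ((C.F.overlap u.right).erase u)
  rw [Finset.card_erase_of_mem hl, Finset.card_erase_of_mem hr] at hunion
  have := C.card_overlap_le u.left
  have := Finset.card_pos.2 ⟨u, hl⟩
  have := Finset.card_pos.2 ⟨u, hr⟩
  omega

section ArcThroughBase

variable {C} {w : CArc}

lemma left_mem_iff (hw : w ∈ C.F.arcs) (hpw : C.p₀ ∈ w.pts) (j : Fin C.k) :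
    (C.aArc j).left ∈ w.pts ↔ angFrom C.p₀ (C.aArc j).left ≤ angFrom C.p₀ w.right := by
  rw [CArc.mem_pts_iff_of_mem hpw, or_iff_left_iff_imp]
  rintro ⟨hwrap, h⟩
  exact absurd h (not_le.2 (C.proper.left_lt_left_of_mem_of_not_mem (C.aArc_mem j) hw
    (C.p₀_not_mem_aArc j) hpw hwrap))

lemma right_mem_iff (hw : w ∈ C.F.arcs) (hpw : C.p₀ ∈ w.pts) (j : Fin C.k) :
    (C.aArc j).right ∈ w.pts ↔ angFrom C.p₀ w.right < angFrom C.p₀ w.left ∧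
      angFrom C.p₀ w.left ≤ angFrom C.p₀ (C.aArc j).right := by
  rw [CArc.mem_pts_iff_of_mem hpw, or_iff_right_iff_imp]
  intro h
  exact absurd h (not_le.2 (C.proper.right_lt_right_of_mem_of_not_mem (C.aArc_mem j) hw
    (C.p₀_not_mem_aArc j) hpw))

lemma left_mem_of_le (hw : w ∈ C.F.arcs) (hpw : C.p₀ ∈ w.pts) {j j' : Fin C.k} (hj : j' ≤ j)
    (h : (C.aArc j).left ∈ w.pts) : (C.aArc j').left ∈ w.pts := by
  rw [left_mem_iff hw hpw] at h ⊢
  exact (C.monotone_angFrom_left hj).trans h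

lemma right_mem_of_le (hw : w ∈ C.F.arcs) (hpw : C.p₀ ∈ w.pts) {j j' : Fin C.k} (hj : j ≤ j')
    (h : (C.aArc j).right ∈ w.pts) : (C.aArc j').right ∈ w.pts := by
  rw [right_mem_iff hw hpw] at h ⊢
  exact ⟨h.1, h.2.trans (C.strictMono_angFrom_right.monotone hj)⟩

lemma left_mem_aArc_of_right_mem (hw : w ∈ C.F.arcs) (hpw : C.p₀ ∈ w.pts) {j j' : Fin C.k}
    (hj : j ≤ j') (h : (C.aArc j).right ∈ w.pts) : w.left ∈ (C.aArc j').pts := by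
  obtain ⟨hwrap, h⟩ := (right_mem_iff hw hpw j').1 (right_mem_of_le hw hpw hj h)
  exact (C.mem_aArc_iff j' w.left).2 ⟨(C.proper.left_lt_left_of_mem_of_not_mem (C.aArc_mem j') hw
    (C.p₀_not_mem_aArc j') hpw hwrap).le, h⟩

lemma x_le_card_left_mem_add_card_right_mem (hw : w ∈ C.F.arcs) (hpw : C.p₀ ∈ w.pts) :
    C.x ≤ (Finset.univ.filter fun j => (C.aArc j).left ∈ w.pts).card +
      (Finset.univ.filter fun j => (C.aArc j).right ∈ w.pts).card := by
  set H := Finset.univ.filter fun j => (C.aArc j).left ∈ w.pts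
  set T := Finset.univ.filter fun j => (C.aArc j).right ∈ w.pts
  have hwO : w ∈ C.F.overlap C.p₀ := Finset.mem_filter.2 ⟨hw, hpw⟩
  have h := C.r_add_x_le ⟨w, hw⟩ (S := (C.F.overlap C.p₀).erase w ∪ (H ∪ T).image C.aArc)
    fun v hv => by
      obtain ⟨hne, hmeet⟩ := ArcFamily.graph_adj.1 hv
      by_cases hpv : C.p₀ ∈ v.1.pts
      · exact Finset.mem_union_left _
          (Finset.mem_erase.2 ⟨hne.symm, Finset.mem_filter.2 ⟨v.2, hpv⟩⟩)
      obtain ⟨j, hj⟩ := C.exists_aArc_eq v.2 hpv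
      rw [← hj, Set.inter_comm] at hmeet
      refine Finset.mem_union_right _ (hj ▸ Finset.mem_image_of_mem _ ?_)
      obtain h | h := C.proper.left_mem_or_right_mem (C.aArc_mem j) hw hmeet
      · exact Finset.mem_union_left _ (Finset.mem_filter.2 ⟨Finset.mem_univ _, h⟩)
      · exact Finset.mem_union_right _ (Finset.mem_filter.2 ⟨Finset.mem_univ _, h⟩)
  have := (Finset.card_union_le _ _).trans (Nat.add_le_add (Finset.card_erase_of_mem hwO).le
    ((Finset.card_image_le (f := C.aArc)).trans (Finset.card_union_le H T)))
  have := Finset.card_pos.2 ⟨w, hwO⟩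
  rw [C.hr] at *
  omega

/-- Otherwise `w` would contain left endpoints only of arcs of index `< j` and right endpoints
only of arcs of index `> j' = k - x + j`, fewer than `x` in total. -/
lemma left_mem_or_right_mem (hw : w ∈ C.F.arcs) (hpw : C.p₀ ∈ w.pts) {j j' : Fin C.k}
    (h : (j : ℕ) + C.k = j' + C.x) : (C.aArc j).left ∈ w.pts ∨ (C.aArc j').right ∈ w.pts := by
  by_contra! ⟨hl, hr⟩
  have hH : (Finset.univ.filter fun i => (C.aArc i).left ∈ w.pts) ⊆ Finset.Iio j := by
    intro i hi
    by_contra! hji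
    exact hl (left_mem_of_le hw hpw (not_lt.1 (by simpa using hji)) (Finset.mem_filter.1 hi).2)
  have hT : (Finset.univ.filter fun i => (C.aArc i).right ∈ w.pts) ⊆ Finset.Ioi j' := by
    intro i hi
    by_contra! hij
    exact hr (right_mem_of_le hw hpw (not_lt.1 (by simpa using hij)) (Finset.mem_filter.1 hi).2)
  have hcardH := Finset.card_le_card hH
  have hcardT := Finset.card_le_card hT
  rw [Fin.card_Iio] at hcardH
  rw [Fin.card_Ioi] at hcardT
  have := x_le_card_left_mem_add_card_right_mem hw hpw
  omega

/-- Either an arc through `p₀` contains the right endpoint of `a j`, and then its left endpoint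
lies in both arcs; or the at least `x + 1` arcs containing that right endpoint all avoid `p₀`,
and the last of them, whose index is at least `j + x`, forces `a j'` to contain it too. -/
lemma aArc_meets {j j' : Fin C.k} (hj : j < j') (hj' : (j' : ℕ) ≤ j + C.x) :
    ((C.aArc j).pts ∩ (C.aArc j').pts).Nonempty := by
  by_cases hq : ∃ w ∈ C.F.overlap (C.aArc j).right, C.p₀ ∈ w.pts
  · obtain ⟨w, hwO, hpw⟩ := hq
    obtain ⟨hw, hjw⟩ := Finset.mem_filter.1 hwO
    exact ⟨w.left, left_mem_aArc_of_right_mem hw hpw le_rfl hjw,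
      left_mem_aArc_of_right_mem hw hpw hj.le hjw⟩
  push Not at hq
  set I := Finset.univ.filter fun i => (C.aArc j).right ∈ (C.aArc i).pts
  have hOI : C.F.overlap (C.aArc j).right ⊆ I.image C.aArc := fun w hwO => by
    obtain ⟨hw, hjw⟩ := Finset.mem_filter.1 hwO
    obtain ⟨i, rfl⟩ := C.exists_aArc_eq hw (hq w hwO)
    exact Finset.mem_image_of_mem _ (Finset.mem_filter.2 ⟨Finset.mem_univ _, hjw⟩)
  have hcard : C.x < I.card := (C.add_one_le_card_overlap_right (C.aArc_mem j)).trans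
    ((Finset.card_le_card hOI).trans Finset.card_image_le)
  have hI (i) (hi : i ∈ I) := (C.mem_aArc_iff i _).1 (Finset.mem_filter.1 hi).2
  obtain ⟨i, hi, hji⟩ := Fin.exists_mem_add_le_of_lt_card
    (fun i hi => C.strictMono_angFrom_right.le_iff_le.1 (hI i hi).2) hcard
  refine ⟨(C.aArc j).right, (C.aArc j).right_mem_pts, (C.mem_aArc_iff j' _).2 ⟨?_, ?_⟩⟩
  · exact (C.monotone_angFrom_left (Fin.le_def.2 (by omega))).trans (hI i hi).1
  · exact C.strictMono_angFrom_right.monotone hj.le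

end ArcThroughBase

def branchSet : {w // w ∈ C.F.overlap C.p₀} ⊕ Fin C.x → Set {a : CArc // a ∈ C.F.arcs}
  | .inl w => {⟨w.1, (Finset.mem_filter.1 w.2).1⟩}
  | .inr i => C.aVert '' {j | (j : ℕ) % C.x = i}

lemma branchSet_connected :
    ∀ i, (C.F.graph.induce (C.branchSet i)).Connected
  | .inl _ => SimpleGraph.induce_singleton_connected _
  | .inr i => SimpleGraph.induce_image_mod_connected C.aVert (i.2.trans_le C.x_le_k) i.2
      fun j h => by
        have hlt : j < ⟨j + C.x, h⟩ := Fin.lt_def.2 (by have := i.2; simp only; omega)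
        exact ArcFamily.graph_adj.2 ⟨C.aArc_injective.ne hlt.ne, C.aArc_meets hlt le_rfl⟩

lemma adj_aVert {w : CArc} (hw : w ∈ C.F.overlap C.p₀) {j : Fin C.k} {p : AddCircle (1:ℝ)}
    (hpw : p ∈ w.pts) (hpj : p ∈ (C.aArc j).pts) :
    C.F.graph.Adj ⟨w, (Finset.mem_filter.1 hw).1⟩ (C.aVert j) :=
  ArcFamily.graph_adj.2
    ⟨fun (e : w = C.aArc j) => C.p₀_not_mem_aArc j (e ▸ (Finset.mem_filter.1 hw).2), p, hpw, hpj⟩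

lemma disjoint_branchSet_inl_inr (w : {w // w ∈ C.F.overlap C.p₀}) (i : Fin C.x) :
    Disjoint (C.branchSet (.inl w)) (C.branchSet (.inr i)) := by
  refine Set.disjoint_singleton_left.2 ?_
  rintro ⟨j, -, hj⟩
  have hj : C.aArc j = w.1 := congrArg Subtype.val hj
  exact C.p₀_not_mem_aArc j (hj ▸ (Finset.mem_filter.1 w.2).2)

lemma pairwise_disjoint_branchSet :
    Pairwise fun i j => Disjoint (C.branchSet i) (C.branchSet j) := by
  rintro (w | i) (w' | i') hne
  · exact Set.disjoint_singleton.2 fun h =>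
      hne (congrArg Sum.inl (Subtype.ext (Subtype.ext_iff.1 h :)))
  · exact C.disjoint_branchSet_inl_inr w i'
  · exact (C.disjoint_branchSet_inl_inr w' i).symm
  · exact (Set.disjoint_image_iff C.aVert_injective).2
      (Set.disjoint_left.2 fun j h h' => hne (congrArg Sum.inr (Fin.ext (h.symm.trans h'))))

/-- The last arc of the chain of residue `i` has index `k - x + i`, which is where `x ∣ k`
enters. -/
lemma exists_adj_branchSet_inl_inr (hdvd : C.x ∣ C.k) (w : {w // w ∈ C.F.overlap C.p₀})
    (i : Fin C.x) : ∃ u ∈ C.branchSet (.inl w), ∃ v ∈ C.branchSet (.inr i), C.F.graph.Adj u v := by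
  have hxk := C.x_le_k
  obtain ⟨hw, hpw⟩ := Finset.mem_filter.1 w.2
  obtain ⟨t, ht⟩ := hdvd
  have hlast : (C.k - C.x + i) % C.x = i := by
    rw [show C.k - C.x + i = i + C.x * (t - 1) by rw [Nat.mul_sub_one, ← ht]; omega,
      Nat.add_mul_mod_self_left, Nat.mod_eq_of_lt i.2]
  obtain h | h := left_mem_or_right_mem hw hpw (j := ⟨i, by omega⟩)
    (j' := ⟨C.k - C.x + i, by omega⟩) (by simp only; omega)
  · exact ⟨_, rfl, _, ⟨_, Nat.mod_eq_of_lt i.2, rfl⟩, C.adj_aVert w.2 h (CArc.left_mem_pts _)⟩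
  · exact ⟨_, rfl, _, ⟨_, hlast, rfl⟩, C.adj_aVert w.2 h (CArc.right_mem_pts _)⟩

lemma exists_adj_branchSet_inr_inr {i i' : Fin C.x} (hii' : i < i') :
    ∃ u ∈ C.branchSet (.inr i), ∃ v ∈ C.branchSet (.inr i'), C.F.graph.Adj u v := by
  have hxk := C.x_le_k
  have hlt : (⟨i, by omega⟩ : Fin C.k) < ⟨i', by omega⟩ := hii'
  exact ⟨C.aVert _, ⟨_, Nat.mod_eq_of_lt i.2, rfl⟩, C.aVert _, ⟨_, Nat.mod_eq_of_lt i'.2, rfl⟩,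
    ArcFamily.graph_adj.2 ⟨C.aArc_injective.ne hlt.ne, C.aArc_meets hlt (by simp only; omega)⟩⟩

lemma pairwise_exists_adj_branchSet (hdvd : C.x ∣ C.k) :
    Pairwise fun i j => ∃ u ∈ C.branchSet i, ∃ v ∈ C.branchSet j, C.F.graph.Adj u v := by
  rintro (w | i) (w' | i') hne
  · have hp (w : {w // w ∈ C.F.overlap C.p₀}) := (Finset.mem_filter.1 w.2).2
    exact ⟨_, rfl, _, rfl, ArcFamily.graph_adj.2
      ⟨fun h => hne (congrArg Sum.inl (Subtype.ext h)), C.p₀, hp w, hp w'⟩⟩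
  · exact C.exists_adj_branchSet_inl_inr hdvd w i'
  · obtain ⟨u, hu, v, hv, huv⟩ := C.exists_adj_branchSet_inl_inr hdvd w' i
    exact ⟨v, hv, u, hu, huv.symm⟩
  · obtain hlt | hgt := lt_or_gt_of_ne fun h => hne (congrArg Sum.inr h)
    · exact C.exists_adj_branchSet_inr_inr hlt
    · obtain ⟨u, hu, v, hv, huv⟩ := C.exists_adj_branchSet_inr_inr hgt
      exact ⟨v, hv, u, hu, huv.symm⟩

end LabeledMinCounterexample

/-- For the labeled minimum counterexample, `k` is not divisible by `x`. -/
theorem k_not_divisible_by_x (C : LabeledMinCounterexample) : ¬ (C.x ∣ C.k) := by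
  intro hdvd
  have hminor := hasKMinor_of_branchSets C.branchSet C.branchSet_connected
    C.pairwise_disjoint_branchSet (C.pairwise_exists_adj_branchSet hdvd)
  rw [Fintype.card_sum, Fintype.card_coe, C.hr, Fintype.card_fin] at hminor
  exact C.no_clique_minor _ C.hx hminor
end
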